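/- Suppose Γ is a union of full subgraphs Γ₁,…,Γ_k satisfying the gluing condition: the subgraphs pairwise share no edges and for each j ≥ 2, V(Γ_j) ∩ (V(Γ₁) ∪ ⋯ ∪ V(Γ_{j−1})) is a single vertex that is a source or sink of Γ. Let m(Δ) denote the set of elements of HK_Δ with maximal content (content equal to all of V(Δ)). Then |m(Γ)| = ∏_{i=1}^k |m(Γ_i)|. -/

import Mathlib

/-- One-step Hecke-Kiselman edge relations for a directed graph with edge relation `E`. -/
def HKRel {V : Type*} (E : V → V → Prop) : FreeMonoid V → FreeMonoid V → Prop := fun a b =>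
  (∃ x : V, a = FreeMonoid.of x * FreeMonoid.of x ∧ b = FreeMonoid.of x) ∨
  (∃ x y : V, x ≠ y ∧ ¬ E x y ∧ ¬ E y x ∧
    a = FreeMonoid.of x * FreeMonoid.of y ∧ b = FreeMonoid.of y * FreeMonoid.of x) ∨
  (∃ x y : V, E x y ∧ ¬ E y x ∧
    a = FreeMonoid.of x * FreeMonoid.of y * FreeMonoid.of x ∧
    b = FreeMonoid.of y * FreeMonoid.of x * FreeMonoid.of y) ∨
  (∃ x y : V, E x y ∧ ¬ E y x ∧
    a = FreeMonoid.of x * FreeMonoid.of y * FreeMonoid.of x ∧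
    b = FreeMonoid.of x * FreeMonoid.of y) ∨
  (∃ x y : V, E x y ∧ E y x ∧
    a = FreeMonoid.of x * FreeMonoid.of y * FreeMonoid.of x ∧
    b = FreeMonoid.of y * FreeMonoid.of x * FreeMonoid.of y)

/-- The congruence on the free monoid generated by the Hecke-Kiselman relations. -/
def HKCon {V : Type*} (E : V → V → Prop) : Con (FreeMonoid V) := conGen (HKRel E)

/-- The Hecke-Kiselman monoid of the directed graph `(V, E)`. -/
def HK {V : Type*} (E : V → V → Prop) := (HKCon E).Quotient

instance {V : Type*} (E : V → V → Prop) : Monoid (HK E) :=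
  inferInstanceAs (Monoid (HKCon E).Quotient)

/-- The canonical quotient map. -/
def HKmk {V : Type*} (E : V → V → Prop) : FreeMonoid V →* HK E := (HKCon E).mk'

/-- The content of an element: vertices occurring in some representing word. -/
def elemContent {V : Type*} (E : V → V → Prop) (x : HK E) : Set V :=
  {v | ∃ w : FreeMonoid V, HKmk E w = x ∧ v ∈ FreeMonoid.toList w}

/-!
Deleting the letters outside `Γ₁ ∪ ⋯ ∪ Γ_{j-1}`, resp. outside `Γ_j`, maps elements of maximal
content to pairs of such elements, so by induction on `k` it suffices to show that this map is
bijective when `Γ = A ∪ B` with `A ∩ B = {a}` and `a` a source or a sink. For a sink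
`a w a = w a`, for a source `a w a = a w`; either way an element of maximal content is `u a v`
with `a` neither in `u` nor in `v`. Letters of `A \ B` commute with letters of `B \ A`, so the
element is `p r a q s` with `p, q` over `A \ B` and `r, s` over `B \ A`; its projections are
`p a q` and `r a s`, and it equals both `r (p a q) s` and `p (r a s) q`. This gives injectivity,
and gluing normal forms of two given projections the same way gives surjectivity.
-/

theorem List.prod_map_filter_mul_prod_map_filter_not_of_commute {ι M : Type*} [Monoid M]
    (p : ι → Prop) [DecidablePred p] (f : ι → M) {l : List ι}
    (h : ∀ x ∈ l, ∀ y ∈ l, p x → ¬p y → Commute (f x) (f y)) :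
    ((l.filter p).map f).prod * ((l.filter fun x => ¬p x).map f).prod = (l.map f).prod := by
  induction l with
  | nil => simp
  | cons x l ih =>
    have ih := ih fun y hy z hz => h y (List.mem_cons_of_mem x hy) z (List.mem_cons_of_mem x hz)
    simp only [decide_not] at ih
    by_cases hx : p x
    · simp [hx, mul_assoc, ih]
    · have hc : Commute ((l.filter p).map f).prod (f x) := by
        refine Commute.list_prod_left _ _ fun g hg => ?_
        obtain ⟨y, hy, rfl⟩ := List.mem_map.1 hg
        obtain ⟨hyl, hpy⟩ := List.mem_filter.1 hy
        exact h y (List.mem_cons_of_mem x hyl) x List.mem_cons_self (by simpa using hpy) hx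
      simp [hx, ← ih, ← mul_assoc, hc.eq]

theorem Fin.iUnion_val_lt_castSucc {α : Type*} {n : ℕ} (S : Fin (n + 1) → Set α) (j : Fin n) :
    ⋃ i : {i : Fin (n + 1) // (i : ℕ) < (j.castSucc : ℕ)}, S i.1 =
      ⋃ i : {i : Fin n // (i : ℕ) < (j : ℕ)}, S i.1.castSucc := by
  ext v
  simp [Fin.exists_fin_succ']

theorem Fin.iUnion_val_lt_last {α : Type*} {n : ℕ} (S : Fin (n + 1) → Set α) :
    ⋃ i : {i : Fin (n + 1) // (i : ℕ) < (Fin.last n : ℕ)}, S i.1 = ⋃ i : Fin n, S i.castSucc := by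
  ext v
  simp [Fin.exists_fin_succ']

theorem HKRel.map {V W : Type*} {E : V → V → Prop} {F : W → W → Prop} {φ : V → W}
    (hφ : Function.Injective φ) (hE : ∀ x y, F (φ x) (φ y) ↔ E x y)
    {a b : FreeMonoid V} (h : HKRel E a b) :
    HKRel F (FreeMonoid.map φ a) (FreeMonoid.map φ b) := by
  rcases h with ⟨x, rfl, rfl⟩ | ⟨x, y, hne, hxy, hyx, rfl, rfl⟩ | ⟨x, y, hxy, hyx, rfl, rfl⟩ |
    ⟨x, y, hxy, hyx, rfl, rfl⟩ | ⟨x, y, hxy, hyx, rfl, rfl⟩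
  · exact Or.inl ⟨φ x, rfl, rfl⟩
  · exact Or.inr <| Or.inl ⟨φ x, φ y, hφ.ne hne, by rwa [hE], by rwa [hE], rfl, rfl⟩
  · exact Or.inr <| Or.inr <| Or.inl ⟨φ x, φ y, by rwa [hE], by rwa [hE], rfl, rfl⟩
  · exact Or.inr <| Or.inr <| Or.inr <| Or.inl ⟨φ x, φ y, by rwa [hE], by rwa [hE], rfl, rfl⟩
  · exact Or.inr <| Or.inr <| Or.inr <| Or.inr ⟨φ x, φ y, by rwa [hE], by rwa [hE], rfl, rfl⟩

theorem HKCon.mem_toList_iff {V : Type*} {E : V → V → Prop} {a b : FreeMonoid V}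
    (h : HKCon E a b) (v : V) : v ∈ a.toList ↔ v ∈ b.toList := by
  let sameLetters : Con (FreeMonoid V) :=
    { r := fun a b => ∀ v, v ∈ a.toList ↔ v ∈ b.toList
      iseqv := ⟨fun _ _ => Iff.rfl, fun h v => (h v).symm, fun h h' v => (h v).trans (h' v)⟩
      mul' := fun h h' v => by simp only [FreeMonoid.toList_mul, List.mem_append, h v, h' v] }
  refine Con.conGen_le (c := sameLetters) |>.2 ?_ h v
  rintro _ _ (⟨x, rfl, rfl⟩ | ⟨x, y, -, -, -, rfl, rfl⟩ | ⟨x, y, -, -, rfl, rfl⟩ |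
    ⟨x, y, -, -, rfl, rfl⟩ | ⟨x, y, -, -, rfl, rfl⟩) v <;>
  simp only [FreeMonoid.toList_mul, FreeMonoid.toList_of, List.mem_append,
    List.mem_singleton] <;> tauto

namespace HK

variable {V W : Type*} {E : V → V → Prop} {F : W → W → Prop}

def gen (E : V → V → Prop) (v : V) : HK E := HKmk E (FreeMonoid.of v)

def maxContent (E : V → V → Prop) : Set (HK E) := {x | elemContent E x = Set.univ}

abbrev induced (E : V → V → Prop) (A : Set V) : A → A → Prop := fun u v => E u v

theorem mk_eq_mk_of_rel {a b : FreeMonoid V} (h : HKRel E a b) : HKmk E a = HKmk E b :=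
  (HKCon E).eq.2 (ConGen.Rel.of a b h)

theorem gen_mul_self (x : V) : gen E x * gen E x = gen E x :=
  (map_mul _ _ _).symm.trans (mk_eq_mk_of_rel (Or.inl ⟨x, rfl, rfl⟩))

theorem commute_gen {x y : V} (hne : x ≠ y) (hxy : ¬E x y) (hyx : ¬E y x) :
    Commute (gen E x) (gen E y) := by
  simpa only [Commute, SemiconjBy, gen, map_mul] using
    mk_eq_mk_of_rel (Or.inr <| Or.inl ⟨x, y, hne, hxy, hyx, rfl, rfl⟩)

theorem gen_braid {x y : V} (hxy : E x y) (hyx : ¬E y x) :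
    gen E x * gen E y * gen E x = gen E y * gen E x * gen E y := by
  simpa only [gen, map_mul] using
    mk_eq_mk_of_rel (Or.inr <| Or.inr <| Or.inl ⟨x, y, hxy, hyx, rfl, rfl⟩)

theorem gen_absorb {x y : V} (hxy : E x y) (hyx : ¬E y x) :
    gen E x * gen E y * gen E x = gen E x * gen E y := by
  simpa only [gen, map_mul] using
    mk_eq_mk_of_rel (Or.inr <| Or.inr <| Or.inr <| Or.inl ⟨x, y, hxy, hyx, rfl, rfl⟩)

theorem gen_braid_of_bidirected {x y : V} (hxy : E x y) (hyx : E y x) :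
    gen E x * gen E y * gen E x = gen E y * gen E x * gen E y := by
  simpa only [gen, map_mul] using
    mk_eq_mk_of_rel (Or.inr <| Or.inr <| Or.inr <| Or.inr ⟨x, y, hxy, hyx, rfl, rfl⟩)

theorem mk_ofList (l : List V) : HKmk E (FreeMonoid.ofList l) = (l.map (gen E)).prod := by
  rw [← FreeMonoid.lift_ofList, ← FreeMonoid.lift_restrict (HKmk E)]
  rfl

theorem exists_prod_eq (x : HK E) : ∃ l : List V, (l.map (gen E)).prod = x := by
  obtain ⟨w, rfl⟩ := (HKCon E).mk'_surjective x
  exact ⟨w.toList, (mk_ofList w.toList).symm⟩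

theorem elemContent_prod (l : List V) : elemContent E (l.map (gen E)).prod = {v | v ∈ l} := by
  rw [← mk_ofList]
  ext v
  exact ⟨fun ⟨w, hw, hv⟩ => (HKCon.mem_toList_iff ((HKCon E).eq.1 hw) v).1 hv,
    fun hv => ⟨FreeMonoid.ofList l, rfl, hv⟩⟩

theorem prod_mem_maxContent_iff {l : List V} :
    (l.map (gen E)).prod ∈ maxContent E ↔ ∀ v, v ∈ l := by
  simp [maxContent, elemContent_prod, Set.eq_univ_iff_forall]

def lift {M : Type*} [Monoid M] (f : V → M)
    (hf : ∀ a b, HKRel E a b → FreeMonoid.lift f a = FreeMonoid.lift f b) : HK E →* M :=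
  (HKCon E).lift (FreeMonoid.lift f) (Con.conGen_le.2 fun a b h => (Con.ker_rel _).2 (hf a b h))

@[simp]
theorem lift_gen {M : Type*} [Monoid M] (f : V → M)
    (hf : ∀ a b, HKRel E a b → FreeMonoid.lift f a = FreeMonoid.lift f b) (v : V) :
    lift f hf (gen E v) = f v :=
  rfl

theorem hom_ext {M : Type*} [Monoid M] {f g : HK E →* M} (h : ∀ v, f (gen E v) = g (gen E v)) :
    f = g :=
  Con.hom_ext (FreeMonoid.hom_eq h)

def map (φ : V → W) (hφ : Function.Injective φ) (hE : ∀ x y, F (φ x) (φ y) ↔ E x y) :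
    HK E →* HK F :=
  lift (gen F ∘ φ) fun a b h => by
    rw [show FreeMonoid.lift (gen F ∘ φ) = (HKmk F).comp (FreeMonoid.map φ) from
      FreeMonoid.hom_eq fun _ => rfl]
    exact mk_eq_mk_of_rel (h.map hφ hE)

section map

variable {φ : V → W} (hφ : Function.Injective φ) (hE : ∀ x y, F (φ x) (φ y) ↔ E x y)

@[simp]
theorem map_gen (v : V) : map φ hφ hE (gen E v) = gen F (φ v) :=
  rfl

theorem map_prod (l : List V) :
    map φ hφ hE (l.map (gen E)).prod = ((l.map φ).map (gen F)).prod := by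
  simp [map_list_prod, List.map_map, Function.comp_def]

theorem elemContent_map (x : HK E) : elemContent F (map φ hφ hE x) = φ '' elemContent E x := by
  obtain ⟨l, rfl⟩ := exists_prod_eq x
  rw [map_prod, elemContent_prod, elemContent_prod]
  ext w
  simp

end map

def congr (e : V ≃ W) (he : ∀ x y, F (e x) (e y) ↔ E x y) : HK E ≃* HK F :=
  (map e e.injective he).toMulEquiv
    (map e.symm e.symm.injective fun x y => by rw [← he, e.apply_symm_apply, e.apply_symm_apply])
    (hom_ext fun v => by simp) (hom_ext fun v => by simp)

theorem card_maxContent_congr (e : V ≃ W) (he : ∀ x y, F (e x) (e y) ↔ E x y) :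
    Nat.card (maxContent E) = Nat.card (maxContent F) := by
  refine Nat.card_congr ((congr e he).toEquiv.subtypeEquiv fun x => ?_)
  change elemContent E x = Set.univ ↔ elemContent F (map e e.injective he x) = Set.univ
  rw [elemContent_map, ← Set.image_univ_of_surjective e.surjective, Set.image_eq_image e.injective]

section induced

open scoped Classical

variable (A : Set V)

def incl : HK (induced E A) →* HK E :=
  map Subtype.val Subtype.val_injective fun _ _ => Iff.rfl

noncomputable def proj : HK E →* HK (induced E A) :=
  lift (fun v => if h : v ∈ A then gen _ ⟨v, h⟩ else 1) <| by
    rintro _ _ (⟨x, rfl, rfl⟩ | ⟨x, y, hne, hxy, hyx, rfl, rfl⟩ | ⟨x, y, hxy, hyx, rfl, rfl⟩ |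
      ⟨x, y, hxy, hyx, rfl, rfl⟩ | ⟨x, y, hxy, hyx, rfl, rfl⟩)
    · by_cases hx : x ∈ A <;> simp [hx, gen_mul_self]
    all_goals by_cases hx : x ∈ A <;> by_cases hy : y ∈ A <;>
      simp [hx, hy, gen_mul_self]
    · exact commute_gen (E := induced E A) (fun h => hne (congrArg Subtype.val h)) hxy hyx
    · exact gen_braid (E := induced E A) hxy hyx
    · exact gen_absorb (E := induced E A) hxy hyx
    · exact gen_braid_of_bidirected (E := induced E A) hxy hyx

theorem proj_incl (y : HK (induced E A)) : proj A (incl A y) = y := by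
  refine DFunLike.congr_fun (hom_ext (f := (proj A).comp (incl A)) (g := MonoidHom.id _)
    fun v => ?_) y
  simp [proj, incl, v.2]

theorem incl_injective : Function.Injective (incl (E := E) A) :=
  Function.LeftInverse.injective (proj_incl A)

theorem incl_proj_prod (l : List V) :
    incl A (proj A (l.map (gen E)).prod) = ((l.filter (· ∈ A)).map (gen E)).prod := by
  induction l with
  | nil => simp
  | cons v l ih =>
    by_cases hv : v ∈ A <;> simp_all [proj, incl]

theorem mem_maxContent_induced_iff {y : HK (induced E A)} :
    y ∈ maxContent (induced E A) ↔ A ⊆ elemContent E (incl A y) := by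
  rw [incl, elemContent_map]
  refine ⟨fun hy => by simp [show elemContent _ y = _ from hy], fun hA => ?_⟩
  refine Set.eq_univ_of_forall fun v => ?_
  obtain ⟨w, hw, hwv⟩ := hA v.2
  rwa [← Subtype.ext hwv]

theorem proj_mem_maxContent {x : HK E} (hx : x ∈ maxContent E) :
    proj A x ∈ maxContent (induced E A) := by
  obtain ⟨l, rfl⟩ := exists_prod_eq x
  rw [mem_maxContent_induced_iff, incl_proj_prod, elemContent_prod]
  intro v hv
  simpa using ⟨prod_mem_maxContent_iff.1 hx v, hv⟩

end induced

section sinkSource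

variable {a : V}

theorem gen_mul_gen_mul_gen_of_sink (ha : ∀ z, ¬E a z) (z : V) :
    gen E a * gen E z * gen E a = gen E z * gen E a := by
  by_cases hza : z = a
  · rw [hza, gen_mul_self, gen_mul_self]
  by_cases hz : E z a
  · rw [← gen_braid hz (ha z), gen_absorb hz (ha z)]
  · rw [(commute_gen (Ne.symm hza) (ha z) hz).eq, mul_assoc, gen_mul_self]

theorem gen_mul_gen_mul_gen_of_source (ha : ∀ z, ¬E z a) (z : V) :
    gen E a * gen E z * gen E a = gen E a * gen E z := by
  by_cases hza : z = a
  · rw [hza, gen_mul_self, gen_mul_self]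
  by_cases hz : E a z
  · exact gen_absorb hz (ha z)
  · rw [mul_assoc, ← (commute_gen (Ne.symm hza) hz (ha z)).eq, ← mul_assoc, gen_mul_self]

theorem gen_mul_mul_gen_of_sink (ha : ∀ z, ¬E a z) (x : HK E) :
    gen E a * x * gen E a = x * gen E a := by
  obtain ⟨l, rfl⟩ := exists_prod_eq x
  induction l with
  | nil => simpa using gen_mul_self a
  | cons z l ih =>
    rw [List.map_cons, List.prod_cons]
    generalize (l.map (gen E)).prod = w at ih ⊢
    calc gen E a * (gen E z * w) * gen E a = gen E a * gen E z * (gen E a * w * gen E a) := by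
          rw [ih]; simp only [mul_assoc]
      _ = (gen E a * gen E z * gen E a) * w * gen E a := by simp only [mul_assoc]
      _ = gen E z * (gen E a * w * gen E a) := by
          rw [gen_mul_gen_mul_gen_of_sink ha]; simp only [mul_assoc]
      _ = gen E z * w * gen E a := by rw [ih, mul_assoc]

theorem gen_mul_mul_gen_of_source (ha : ∀ z, ¬E z a) (x : HK E) :
    gen E a * x * gen E a = gen E a * x := by
  obtain ⟨l, rfl⟩ := exists_prod_eq x
  induction l with
  | nil => simpa using gen_mul_self a
  | cons z l ih =>
    rw [List.map_cons, List.prod_cons]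
    generalize (l.map (gen E)).prod = w at ih ⊢
    calc gen E a * (gen E z * w) * gen E a = (gen E a * gen E z * gen E a) * w * gen E a := by
          rw [gen_mul_gen_mul_gen_of_source ha]; simp only [mul_assoc]
      _ = gen E a * gen E z * (gen E a * w * gen E a) := by simp only [mul_assoc]
      _ = (gen E a * gen E z * gen E a) * w := by rw [ih]; simp only [mul_assoc]
      _ = gen E a * (gen E z * w) := by rw [gen_mul_gen_mul_gen_of_source ha, mul_assoc]

theorem exists_eq_prod_mul_gen_mul_prod (ha : (∀ z, ¬E z a) ∨ (∀ z, ¬E a z)) {l : List V}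
    (hl : a ∈ l) : ∃ u v : List V, a ∉ u ∧ a ∉ v ∧
      (l.map (gen E)).prod = (u.map (gen E)).prod * gen E a * (v.map (gen E)).prod := by
  induction l with
  | nil => simp at hl
  | cons x l ih =>
    by_cases hxl : a ∈ l
    · obtain ⟨u, v, hu, hv, hl⟩ := ih hxl
      by_cases hxa : x = a
      · subst hxa
        rcases ha with hsource | hsink
        · refine ⟨[], u ++ v, List.not_mem_nil, by simp [hu, hv], ?_⟩
          simp [hl, ← mul_assoc, gen_mul_mul_gen_of_source hsource]
        · refine ⟨u, v, hu, hv, ?_⟩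
          simp [hl, ← mul_assoc, gen_mul_mul_gen_of_sink hsink]
      · refine ⟨x :: u, v, by simp [Ne.symm hxa, hu], hv, ?_⟩
        simp [hl, mul_assoc]
    · obtain rfl : a = x := by simpa [hxl] using hl
      exact ⟨[], l, List.not_mem_nil, hxl, by simp⟩

theorem exists_incl_eq {A : Set V} (haA : a ∈ A) (ha : (∀ z, ¬E z a) ∨ (∀ z, ¬E a z))
    {y : HK (induced E A)} (hy : y ∈ maxContent (induced E A)) :
    ∃ p q : List V, (∀ v ∈ p ++ q, v ∈ A \ {a}) ∧ incl A y = ((p ++ a :: q).map (gen E)).prod := by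
  obtain ⟨l, rfl⟩ := exists_prod_eq y
  obtain ⟨u, v, hu, hv, hl⟩ := exists_eq_prod_mul_gen_mul_prod (E := induced E A) (a := ⟨a, haA⟩)
    (ha.imp (fun h z => h z) (fun h z => h z)) (prod_mem_maxContent_iff.1 hy _)
  refine ⟨u.map Subtype.val, v.map Subtype.val, fun w hw => ?_, ?_⟩
  · simp only [List.mem_append, List.mem_map] at hw
    rcases hw with ⟨w, hw, rfl⟩ | ⟨w, hw, rfl⟩
    · exact ⟨w.2, fun h => hu ((Subtype.ext h : w = ⟨a, haA⟩) ▸ hw)⟩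
    · exact ⟨w.2, fun h => hv ((Subtype.ext h : w = ⟨a, haA⟩) ▸ hw)⟩
  · simp [hl, incl, map_prod, mul_assoc]

end sinkSource

section gluing

open scoped Classical

variable {A B : Set V} {a : V}

theorem commute_gen_of_mem_diff (hedge : ∀ x y, E x y → x ∈ A ∧ y ∈ A ∨ x ∈ B ∧ y ∈ B)
    {x y : V} (hx : x ∈ A \ B) (hy : y ∈ B \ A) : Commute (gen E x) (gen E y) := by
  obtain ⟨hxA, hxB⟩ := hx
  obtain ⟨hyB, hyA⟩ := hy
  refine commute_gen (fun h => hxB (h ▸ hyB)) (fun h => ?_) (fun h => ?_) <;>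
    rcases hedge _ _ h with h' | h' <;> tauto

theorem commute_prod_of_mem_diff (hedge : ∀ x y, E x y → x ∈ A ∧ y ∈ A ∨ x ∈ B ∧ y ∈ B)
    {p r : List V} (hp : ∀ x ∈ p, x ∈ A \ B) (hr : ∀ y ∈ r, y ∈ B \ A) :
    Commute (p.map (gen E)).prod (r.map (gen E)).prod := by
  refine Commute.list_prod_left _ _ fun g hg => Commute.list_prod_right _ _ fun g' hg' => ?_
  obtain ⟨x, hx, rfl⟩ := List.mem_map.1 hg
  obtain ⟨y, hy, rfl⟩ := List.mem_map.1 hg'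
  exact commute_gen_of_mem_diff hedge (hp x hx) (hr y hy)

theorem exists_prod_mul_prod_eq (hcover : A ∪ B = Set.univ) (hAB : A ∩ B = {a})
    (hedge : ∀ x y, E x y → x ∈ A ∧ y ∈ A ∨ x ∈ B ∧ y ∈ B) {u : List V} (hu : a ∉ u) :
    ∃ p r : List V, (∀ x ∈ p, x ∈ A \ B) ∧ (∀ y ∈ r, y ∈ B \ A) ∧
      (p.map (gen E)).prod * (r.map (gen E)).prod = (u.map (gen E)).prod := by
  have hA : ∀ x ∈ u, x ∈ A → x ∈ A \ B := fun x hx hxA =>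
    ⟨hxA, fun hxB => hu ((hAB ▸ ⟨hxA, hxB⟩ : x ∈ ({a} : Set V)) ▸ hx)⟩
  have hB : ∀ y ∈ u, y ∉ A → y ∈ B \ A := fun y _ hyA =>
    ⟨(hcover ▸ Set.mem_univ y : y ∈ A ∪ B).resolve_left hyA, hyA⟩
  refine ⟨u.filter (· ∈ A), u.filter (· ∉ A), fun x hx => ?_, fun y hy => ?_,
    List.prod_map_filter_mul_prod_map_filter_not_of_commute _ _ fun x hx y hy hxA hyA =>
      commute_gen_of_mem_diff hedge (hA x hx hxA) (hB y hy hyA)⟩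
  · obtain ⟨hxu, hxA⟩ := List.mem_filter.1 hx
    exact hA x hxu (of_decide_eq_true hxA)
  · obtain ⟨hyu, hyA⟩ := List.mem_filter.1 hy
    exact hB y hyu (of_decide_eq_true hyA)

theorem exists_glue_eq (hcover : A ∪ B = Set.univ) (hAB : A ∩ B = {a})
    (hedge : ∀ x y, E x y → x ∈ A ∧ y ∈ A ∨ x ∈ B ∧ y ∈ B) (ha : (∀ z, ¬E z a) ∨ (∀ z, ¬E a z))
    {x : HK E} (hx : x ∈ maxContent E) :
    ∃ p q r s : List V, (∀ v ∈ p ++ q, v ∈ A \ B) ∧ (∀ v ∈ r ++ s, v ∈ B \ A) ∧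
      ((p ++ r ++ a :: (q ++ s)).map (gen E)).prod = x := by
  obtain ⟨l, rfl⟩ := exists_prod_eq x
  obtain ⟨u, v, hu, hv, hl⟩ := exists_eq_prod_mul_gen_mul_prod ha (prod_mem_maxContent_iff.1 hx a)
  obtain ⟨p, r, hp, hr, hpr⟩ := exists_prod_mul_prod_eq hcover hAB hedge hu
  obtain ⟨q, s, hq, hs, hqs⟩ := exists_prod_mul_prod_eq hcover hAB hedge hv
  refine ⟨p, q, r, s, by simp only [List.mem_append]; tauto,
    by simp only [List.mem_append]; tauto, ?_⟩
  simp only [hl, ← hpr, ← hqs, List.map_append, List.map_cons, List.prod_append, List.prod_cons,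
    mul_assoc]

section glue

variable {p q r s : List V} (hpq : ∀ v ∈ p ++ q, v ∈ A \ B) (hrs : ∀ v ∈ r ++ s, v ∈ B \ A)
include hpq hrs

theorem prod_glue_eq_left (hedge : ∀ x y, E x y → x ∈ A ∧ y ∈ A ∨ x ∈ B ∧ y ∈ B) :
    ((p ++ r ++ a :: (q ++ s)).map (gen E)).prod =
      (r.map (gen E)).prod * ((p ++ a :: q).map (gen E)).prod * (s.map (gen E)).prod := by
  have hpr := commute_prod_of_mem_diff hedge (p := p) (r := r)
    (fun x hx => hpq x (by simp [hx])) (fun y hy => hrs y (by simp [hy]))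
  simp only [List.map_append, List.map_cons, List.prod_append, List.prod_cons]
  rw [hpr.eq]
  simp only [mul_assoc]

theorem prod_glue_eq_right (hedge : ∀ x y, E x y → x ∈ A ∧ y ∈ A ∨ x ∈ B ∧ y ∈ B) :
    ((p ++ r ++ a :: (q ++ s)).map (gen E)).prod =
      (p.map (gen E)).prod * ((r ++ a :: s).map (gen E)).prod * (q.map (gen E)).prod := by
  have hqs := commute_prod_of_mem_diff hedge (p := q) (r := s)
    (fun x hx => hpq x (by simp [hx])) (fun y hy => hrs y (by simp [hy]))
  simp only [List.map_append, List.map_cons, List.prod_append, List.prod_cons]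
  rw [hqs.eq]
  simp only [mul_assoc]

theorem incl_proj_glue_left (haA : a ∈ A) :
    incl A (proj A ((p ++ r ++ a :: (q ++ s)).map (gen E)).prod) =
      ((p ++ a :: q).map (gen E)).prod := by
  have hA : ∀ l : List V, (∀ v ∈ l, v ∈ p ++ q) → l.filter (· ∈ A) = l := fun l hl =>
    List.filter_eq_self.2 fun v hv => decide_eq_true (hpq v (hl v hv)).1
  have hB : ∀ l : List V, (∀ v ∈ l, v ∈ r ++ s) → l.filter (· ∈ A) = [] := fun l hl =>
    List.filter_eq_nil_iff.2 fun v hv => by simpa using (hrs v (hl v hv)).2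
  rw [incl_proj_prod]
  simp [hA p (by simp +contextual), hA q (by simp +contextual), hB r (by simp +contextual),
    hB s (by simp +contextual), haA]

theorem incl_proj_glue_right (haB : a ∈ B) :
    incl B (proj B ((p ++ r ++ a :: (q ++ s)).map (gen E)).prod) =
      ((r ++ a :: s).map (gen E)).prod := by
  have hA : ∀ l : List V, (∀ v ∈ l, v ∈ p ++ q) → l.filter (· ∈ B) = [] := fun l hl =>
    List.filter_eq_nil_iff.2 fun v hv => by simpa using (hpq v (hl v hv)).2
  have hB : ∀ l : List V, (∀ v ∈ l, v ∈ r ++ s) → l.filter (· ∈ B) = l := fun l hl =>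
    List.filter_eq_self.2 fun v hv => decide_eq_true (hrs v (hl v hv)).1
  rw [incl_proj_prod]
  simp [hA p (by simp +contextual), hA q (by simp +contextual), hB r (by simp +contextual),
    hB s (by simp +contextual), haB]

end glue

theorem prod_glue_eq_of_proj_eq (hedge : ∀ x y, E x y → x ∈ A ∧ y ∈ A ∨ x ∈ B ∧ y ∈ B)
    (haA : a ∈ A) (haB : a ∈ B) {p q r s p' q' r' s' : List V}
    (hpq : ∀ v ∈ p ++ q, v ∈ A \ B) (hrs : ∀ v ∈ r ++ s, v ∈ B \ A)
    (hpq' : ∀ v ∈ p' ++ q', v ∈ A \ B) (hrs' : ∀ v ∈ r' ++ s', v ∈ B \ A)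
    (hA : proj A ((p ++ r ++ a :: (q ++ s)).map (gen E)).prod =
      proj A ((p' ++ r' ++ a :: (q' ++ s')).map (gen E)).prod)
    (hB : proj B ((p ++ r ++ a :: (q ++ s)).map (gen E)).prod =
      proj B ((p' ++ r' ++ a :: (q' ++ s')).map (gen E)).prod) :
    ((p ++ r ++ a :: (q ++ s)).map (gen E)).prod =
      ((p' ++ r' ++ a :: (q' ++ s')).map (gen E)).prod := by
  have hpaq : ((p ++ a :: q).map (gen E)).prod = ((p' ++ a :: q').map (gen E)).prod := by
    rw [← incl_proj_glue_left hpq hrs haA, hA, incl_proj_glue_left hpq' hrs' haA]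
  have hras : ((r ++ a :: s).map (gen E)).prod = ((r' ++ a :: s').map (gen E)).prod := by
    rw [← incl_proj_glue_right hpq hrs haB, hB, incl_proj_glue_right hpq' hrs' haB]
  rw [prod_glue_eq_left hpq hrs hedge, hpaq, ← prod_glue_eq_left hpq' hrs hedge,
    prod_glue_eq_right hpq' hrs hedge, hras, ← prod_glue_eq_right hpq' hrs' hedge]

theorem prod_glue_mem_maxContent (hcover : A ∪ B = Set.univ) {p q r s : List V}
    {y₁ : HK (induced E A)} {y₂ : HK (induced E B)}
    (hy₁ : y₁ ∈ maxContent (induced E A)) (hy₂ : y₂ ∈ maxContent (induced E B))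
    (h₁ : incl A y₁ = ((p ++ a :: q).map (gen E)).prod)
    (h₂ : incl B y₂ = ((r ++ a :: s).map (gen E)).prod) :
    ((p ++ r ++ a :: (q ++ s)).map (gen E)).prod ∈ maxContent E := by
  refine prod_mem_maxContent_iff.2 fun v => ?_
  rcases (hcover ▸ Set.mem_univ v : v ∈ A ∪ B) with hv | hv
  · have := (mem_maxContent_induced_iff A).1 hy₁ hv
    simp only [h₁, elemContent_prod, Set.mem_ofPred_eq, List.mem_append, List.mem_cons] at this ⊢
    tauto
  · have := (mem_maxContent_induced_iff B).1 hy₂ hv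
    simp only [h₂, elemContent_prod, Set.mem_ofPred_eq, List.mem_append, List.mem_cons] at this ⊢
    tauto

theorem card_maxContent_eq_mul (hcover : A ∪ B = Set.univ) (hAB : A ∩ B = {a})
    (hedge : ∀ x y, E x y → x ∈ A ∧ y ∈ A ∨ x ∈ B ∧ y ∈ B) (ha : (∀ z, ¬E z a) ∨ (∀ z, ¬E a z)) :
    Nat.card (maxContent E) =
      Nat.card (maxContent (induced E A)) * Nat.card (maxContent (induced E B)) := by
  have haAB : a ∈ A ∩ B := hAB ▸ rfl
  let π (x : maxContent E) : maxContent (induced E A) × maxContent (induced E B) :=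
    (⟨proj A x, proj_mem_maxContent A x.2⟩, ⟨proj B x, proj_mem_maxContent B x.2⟩)
  have hπ : π.Bijective := by
    refine ⟨fun ⟨x, hx⟩ ⟨y, hy⟩ h => ?_, fun ⟨⟨y₁, hy₁⟩, ⟨y₂, hy₂⟩⟩ => ?_⟩
    · obtain ⟨p, q, r, s, hpq, hrs, rfl⟩ := exists_glue_eq hcover hAB hedge ha hx
      obtain ⟨p', q', r', s', hpq', hrs', rfl⟩ := exists_glue_eq hcover hAB hedge ha hy
      simp only [π, Prod.mk.injEq, Subtype.mk.injEq] at h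
      exact Subtype.ext
        (prod_glue_eq_of_proj_eq hedge haAB.1 haAB.2 hpq hrs hpq' hrs' h.1 h.2)
    · obtain ⟨p, q, hpq, h₁⟩ := exists_incl_eq haAB.1 ha hy₁
      obtain ⟨r, s, hrs, h₂⟩ := exists_incl_eq haAB.2 ha hy₂
      rw [← hAB, Set.sdiff_self_inter] at hpq
      rw [← hAB, Set.sdiff_inter_self_eq_sdiff] at hrs
      refine ⟨⟨_, prod_glue_mem_maxContent hcover hy₁ hy₂ h₁ h₂⟩, ?_⟩
      simp only [π, Prod.mk.injEq, Subtype.mk.injEq]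
      exact ⟨incl_injective A (by rw [incl_proj_glue_left hpq hrs haAB.1, h₁]),
        incl_injective B (by rw [incl_proj_glue_right hpq hrs haAB.2, h₂])⟩
  rw [← Nat.card_prod]
  exact Nat.card_congr (Equiv.ofBijective π hπ)

end gluing

theorem card_maxContent_of_isEmpty [IsEmpty V] : Nat.card (maxContent E) = 1 := by
  have hunique (x : HK E) : x = 1 := by
    obtain ⟨l, rfl⟩ := exists_prod_eq x
    simp [List.eq_nil_of_subset_nil fun v _ => isEmptyElim v]
  refine Nat.card_eq_one_iff_exists.2 ⟨⟨1, Set.eq_univ_of_forall isEmptyElim⟩, fun y => ?_⟩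
  exact Subtype.ext (hunique y)

theorem card_maxContent_induced_univ :
    Nat.card (maxContent (induced E Set.univ)) = Nat.card (maxContent E) :=
  card_maxContent_congr (Equiv.Set.univ V) fun _ _ => Iff.rfl

theorem card_maxContent_induced_induced {A X : Set V} (hAX : A ⊆ X) :
    Nat.card (maxContent (induced (induced E X) (Subtype.val ⁻¹' A))) =
      Nat.card (maxContent (induced E A)) :=
  card_maxContent_congr ⟨fun v => ⟨v.1.1, v.2⟩, fun v => ⟨⟨v.1, hAX v.2⟩, v.2⟩, fun _ => rfl,
    fun _ => rfl⟩ fun _ _ => Iff.rfl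

theorem card_maxContent_induced_union {A B : Set V} {a : V} (hAB : A ∩ B = {a})
    (hedge : ∀ x y, E x y → x ∈ A ∪ B → y ∈ A ∪ B → x ∈ A ∧ y ∈ A ∨ x ∈ B ∧ y ∈ B)
    (ha : (∀ z, ¬E z a) ∨ (∀ z, ¬E a z)) :
    Nat.card (maxContent (induced E (A ∪ B))) =
      Nat.card (maxContent (induced E A)) * Nat.card (maxContent (induced E B)) := by
  have haAB : a ∈ A ∪ B := Or.inl (hAB ▸ rfl : a ∈ A ∩ B).1
  rw [← card_maxContent_induced_induced (E := E) (Set.subset_union_left : A ⊆ A ∪ B),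
    ← card_maxContent_induced_induced (E := E) (Set.subset_union_right : B ⊆ A ∪ B)]
  refine card_maxContent_eq_mul (a := ⟨a, haAB⟩) ?_ ?_ (fun x y h => hedge x y h x.2 y.2)
    (ha.imp (fun h z => h z) fun h z => h z)
  · exact Set.eq_univ_of_forall fun v => v.2
  · ext v
    rw [Set.mem_singleton_iff, ← Subtype.val_inj]
    exact Set.ext_iff.1 hAB v.1

theorem card_maxContent_induced_iUnion : ∀ (k : ℕ) (S : Fin (k + 1) → Set V),
    (∀ x y, E x y → x ∈ ⋃ i, S i → y ∈ ⋃ i, S i → ∃ i, x ∈ S i ∧ y ∈ S i) →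
    (∀ j : Fin (k + 1), 0 < (j : ℕ) → ∃ a : V,
      (S j ∩ ⋃ i : {i : Fin (k + 1) // (i : ℕ) < (j : ℕ)}, S i.1) = {a} ∧
      ((∀ z, ¬E z a) ∨ (∀ z, ¬E a z))) →
    Nat.card (maxContent (induced E (⋃ i, S i))) = ∏ i, Nat.card (maxContent (induced E (S i)))
  | 0, S, _, _ => by
    rw [Fin.prod_univ_one, show ⋃ i, S i = S 0 by simp [Set.iUnion_fin_add_one_eq_iUnion_castSucc]]
  | k + 1, S, hedges, hglue => by
    obtain ⟨a, hlast, ha⟩ := hglue (Fin.last (k + 1)) k.succ_pos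
    rw [Fin.iUnion_val_lt_last, Set.inter_comm] at hlast
    have hloop : ¬E a a := ha.elim (· a) (· a)
    rw [Set.iUnion_fin_add_one_eq_iUnion_castSucc, Function.comp_def] at hedges ⊢
    rw [card_maxContent_induced_union hlast ?_ ha, Fin.prod_univ_castSucc,
      card_maxContent_induced_iUnion k (fun i => S i.castSucc) ?_ ?_]
    · intro x y hxy hx hy
      obtain ⟨i, hxi, hyi⟩ := hedges x y hxy (Or.inl hx) (Or.inl hy)
      rcases Fin.eq_castSucc_or_eq_last i with ⟨j, rfl⟩ | rfl
      · exact ⟨j, hxi, hyi⟩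
      · have hxa : x ∈ ({a} : Set V) := hlast ▸ ⟨hx, hxi⟩
        have hya : y ∈ ({a} : Set V) := hlast ▸ ⟨hy, hyi⟩
        rw [Set.mem_singleton_iff.1 hxa, Set.mem_singleton_iff.1 hya] at hxy
        exact absurd hxy hloop
    · intro j hj
      obtain ⟨b, hb, hb'⟩ := hglue j.castSucc hj
      exact ⟨b, by rwa [Fin.iUnion_val_lt_castSucc] at hb, hb'⟩
    · intro x y hxy hx hy
      obtain ⟨i, hxi, hyi⟩ := hedges x y hxy hx hy
      rcases Fin.eq_castSucc_or_eq_last i with ⟨j, rfl⟩ | rfl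
      · exact Or.inl ⟨Set.mem_iUnion.2 ⟨j, hxi⟩, Set.mem_iUnion.2 ⟨j, hyi⟩⟩
      · exact Or.inr ⟨hxi, hyi⟩

end HK

theorem hk_gluing_max_content_card_general {V : Type*} (E : V → V → Prop)
    {k : ℕ} (S : Fin k → Set V)
    (hcover : (⋃ i, S i) = Set.univ)
    (hedges : ∀ x y, E x y → ∃ i, x ∈ S i ∧ y ∈ S i)
    (hglue : ∀ j : Fin k, 0 < (j : ℕ) → ∃ a : V,
      (S j ∩ ⋃ i : {i : Fin k // (i : ℕ) < (j : ℕ)}, S i.1) = {a} ∧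
      ((∀ z, ¬ E z a) ∨ (∀ z, ¬ E a z))) :
    Nat.card {x : HK E // elemContent E x = Set.univ} =
      ∏ i : Fin k, Nat.card {x : HK (fun u v : S i => E u v) //
        elemContent (fun u v : S i => E u v) x = Set.univ} := by
  change Nat.card (HK.maxContent E) = ∏ i, Nat.card (HK.maxContent (HK.induced E (S i)))
  cases k with
  | zero =>
    have : IsEmpty V :=
      ⟨fun v => (Set.mem_iUnion.1 (hcover ▸ Set.mem_univ v : v ∈ ⋃ i, S i)).elim fun i _ => i.elim0⟩
    rw [HK.card_maxContent_of_isEmpty, Fin.prod_univ_zero]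
  | succ k =>
    rw [← HK.card_maxContent_induced_univ, ← hcover]
    exact HK.card_maxContent_induced_iUnion k S (fun x y h _ _ => hedges x y h) hglue

/-- If `Γ` is a union of full subgraphs `Γ₁, …, Γ_k` satisfying the gluing condition
(pairwise no common edges; each `Γ_j` for `j ≥ 2` meets the union of the previous ones in
a single vertex which is a source or a sink of `Γ`), then the number of elements of
maximal content in `HK_Γ` is the product of the numbers of elements of maximal content
in the `HK_{Γ_i}`. -/
theorem hk_gluing_max_content_card {V : Type*} (E : V → V → Prop)
    (hbidir : ∀ x y, ¬ (E x y ∧ E y x)) (hloop : ∀ x, ¬ E x x)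
    {k : ℕ} (hk : 0 < k) (S : Fin k → Set V)
    (hcover : (⋃ i, S i) = Set.univ)
    (hedges : ∀ x y, E x y → ∃ i, x ∈ S i ∧ y ∈ S i)
    (hnoshared : ∀ i j : Fin k, i ≠ j →
      ∀ x y, E x y → ¬ ((x ∈ S i ∧ y ∈ S i) ∧ (x ∈ S j ∧ y ∈ S j)))
    (hglue : ∀ j : Fin k, 0 < (j : ℕ) → ∃ a : V,
      (S j ∩ ⋃ i : {i : Fin k // (i : ℕ) < (j : ℕ)}, S i.1) = {a} ∧
      ((∀ z, ¬ E z a) ∨ (∀ z, ¬ E a z))) :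
    Nat.card {x : HK E // elemContent E x = Set.univ} =
      ∏ i : Fin k, Nat.card {x : HK (fun u v : S i => E u v) //
        elemContent (fun u v : S i => E u v) x = Set.univ} :=
  hk_gluing_max_content_card_general E S hcover hedges hglue
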